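/- If D is a quasi-Prüfer domain and P a prime ideal of D, then the localization D_P is a quasi-Prüfer domain. -/

import Mathlib

/-!
Over a localization `R = S⁻¹D`, the ring `R[X]` is a localization of `D[X]`, so every ideal `Q` of
`R[X]` is extended from its contraction `Q₀` to `D[X]`. If `Q` is prime and `Q ⊆ P[X]`, then `Q₀`
is a prime of `D[X]` inside `(P ∩ D)[X]`, hence `Q₀ = q[X]` for an ideal `q` of `D`; extending back,
`Q = (qR)[X]` is extended from `R`.
-/

set_option synthInstance.maxHeartbeats 1000000
set_option maxHeartbeats 1000000

open Polynomial

/-- `D` is a quasi-Prüfer domain: for each prime `P` of `D` and each prime `Q` of `D[X]`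
with `Q ⊆ P[X]`, one has `Q = (Q ∩ D)[X]`. -/
def IsQuasiPrufer (D : Type*) [CommRing D] : Prop :=
  ∀ P : Ideal D, P.IsPrime → ∀ Q : Ideal D[X], Q.IsPrime →
    Q ≤ P.map (C : D →+* D[X]) → Q = (Q.comap (C : D →+* D[X])).map (C : D →+* D[X])

/-- `D` is a Prüfer domain: every nonzero finitely generated ideal is invertible
(as a fractional ideal in the fraction field). -/
def IsPruferDom (D : Type*) [CommRing D] [IsDomain D] : Prop :=
  ∀ I : Ideal D, I ≠ ⊥ → I.FG →
    IsUnit (I : FractionalIdeal (nonZeroDivisors D) (FractionRing D))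

/-- The valuative dimension of a domain: the supremum of the Krull dimensions of its
valuation overrings. -/
noncomputable def valuativeDim (R : Type*) [CommRing R] [IsDomain R] : WithBot ℕ∞ :=
  ⨆ (V : Subalgebra R (FractionRing R)) (_ : ValuationRing V), ringKrullDim V

/-- `P₁ ⊊ P₂` are adjacent primes: both prime, `P₁ < P₂`, and no prime strictly between. -/
def AdjacentPrimes {R : Type*} [CommRing R] (P₁ P₂ : Ideal R) : Prop :=
  P₁.IsPrime ∧ P₂.IsPrime ∧ P₁ < P₂ ∧ ∀ Q : Ideal R, Q.IsPrime → P₁ < Q → ¬ Q < P₂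

/-- `D` is a strong S-domain: adjacent primes `P₁ ⊊ P₂` extend to adjacent primes
`P₁[X] ⊊ P₂[X]` of `D[X]`. -/
def IsStrongS (D : Type*) [CommRing D] : Prop :=
  ∀ P₁ P₂ : Ideal D, AdjacentPrimes P₁ P₂ →
    AdjacentPrimes (P₁.map (C : D →+* D[X])) (P₂.map (C : D →+* D[X]))

/-- Transcendence degree: the supremum of cardinalities of algebraically independent
subsets. -/
noncomputable def trdeg (F E : Type*) [CommRing F] [CommRing E] [Algebra F E] : Cardinal :=
  ⨆ s : {s : Set E // AlgebraicIndependent F ((↑) : s → E)}, Cardinal.mk s.1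

section Pullback

variable (D : Type*) [CommRing D] [IsDomain D] (T : Subalgebra D (FractionRing D))
  (Q : Ideal T) [Q.IsPrime]

instance : IsDomain (Localization.AtPrime Q) :=
  IsLocalization.isDomain_localization Q.primeCompl_le_nonZeroDivisors

/-- The copy of the residue field `k(q) = Frac(D/q)` (where `q = Q ∩ D`) inside the residue
field `k(Q) = T_Q/QT_Q`: the subfield generated by the image of `D`. -/
noncomputable def kqSub : Subfield (IsLocalRing.ResidueField (Localization.AtPrime Q)) :=
  Subfield.closure (Set.range ((IsLocalRing.residue (Localization.AtPrime Q)).comp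
    ((algebraMap T (Localization.AtPrime Q)).comp (algebraMap D T))))

/-- The pullback ring `D(Q) = D_q + QT_Q`: the preimage of `k(q) ⊆ k(Q)` under the
canonical surjection `T_Q → k(Q)`. -/
noncomputable def DQ : Subring (Localization.AtPrime Q) :=
  (kqSub D T Q).toSubring.comap (IsLocalRing.residue (Localization.AtPrime Q))

end Pullback
namespace Ideal

variable {A B : Type*} [CommRing A] [CommRing B]

theorem comap_mapRingHom_map_C (f : A →+* B) (P : Ideal B) :
    (P.map (C : B →+* B[X])).comap (mapRingHom f) = (P.comap f).map (C : A →+* A[X]) := by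
  ext p
  simp only [mem_comap, mem_map_C_iff, coe_mapRingHom, coeff_map]

theorem map_mapRingHom_map_C (f : A →+* B) (I : Ideal A) :
    (I.map (C : A →+* A[X])).map (mapRingHom f) = (I.map f).map (C : B →+* B[X]) := by
  rw [map_map, map_map, mapRingHom_comp_C]

end Ideal

attribute [local instance] Polynomial.algebra in
theorem IsLocalization.map_comap_mapRingHom {D R : Type*} [CommRing D] [CommRing R] [Algebra D R]
    (S : Submonoid D) [IsLocalization S R] (Q : Ideal R[X]) :
    (Q.comap (mapRingHom (algebraMap D R))).map (mapRingHom (algebraMap D R)) = Q :=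
  have := Polynomial.isLocalization S R
  IsLocalization.map_under (S.map C) R[X] Q

theorem IsQuasiPrufer.of_isLocalization {D R : Type*} [CommRing D] [CommRing R] [Algebra D R]
    (S : Submonoid D) [IsLocalization S R] (hD : IsQuasiPrufer D) : IsQuasiPrufer R := by
  intro P hP Q hQ hQP
  set φ := mapRingHom (algebraMap D R)
  have hQ₀P : Q.comap φ ≤ (P.comap (algebraMap D R)).map C :=
    Ideal.comap_mapRingHom_map_C (algebraMap D R) P ▸ Ideal.comap_mono hQP
  have hQ₀ := hD _ (hP.comap _) _ (hQ.comap φ) hQ₀P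
  obtain ⟨I, rfl⟩ : ∃ I : Ideal R, Q = I.map C := ⟨((Q.comap φ).comap C).map (algebraMap D R), by
    rw [← Ideal.map_mapRingHom_map_C, ← hQ₀, IsLocalization.map_comap_mapRingHom S]⟩
  exact (Ideal.map_comap_map C I).symm

theorem statement_12_general (D : Type*) [CommRing D] (h : IsQuasiPrufer D)
    (P : Ideal D) [P.IsPrime] : IsQuasiPrufer (Localization.AtPrime P) :=
  h.of_isLocalization P.primeCompl

/-- If `D` is quasi-Prüfer and `P` is a prime of `D`, then `D_P` is
quasi-Prüfer. -/
theorem statement_12 (D : Type*) [CommRing D] [IsDomain D] (h : IsQuasiPrufer D)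
    (P : Ideal D) [P.IsPrime] : IsQuasiPrufer (Localization.AtPrime P) :=
  statement_12_general D h P
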